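/- Coverage guarantee for split conformal prediction with a locally weighted (mean–standard deviation) score (Algorithm 1). Let 𝒳 be a measurable space, let n be a positive natural number, let α ∈ (0,1) be such that ⌈(n+1)(1−α)⌉ ≤ n, let μ : 𝒳 → ℝ and σ : 𝒳 → ℝ be measurable functions with σ(x) > 0 for every x ∈ 𝒳, and let (X₁,Y₁), …, (Xₙ,Yₙ), (X_test, Y_test) be independent and identically distributed random pairs taking values in 𝒳 × ℝ. Define calibration scores sᵢ = |Yᵢ − μ(Xᵢ)| / σ(Xᵢ) for i = 1, …, n, and let q̂ be the ⌈(n+1)(1−α)⌉-th smallest value among s₁, …, sₙ. Then ℙ( μ(X_test) − q̂·σ(X_test) ≤ Y_test ≤ μ(X_test) + q̂·σ(X_test) ) ≥ 1 − α. -/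

import Mathlib

/-!
Write `s₁, …, sₙ₊₁` for the scores, the last one being the test score, and `k = ⌈(n+1)(1-α)⌉`.
If fewer than `k` of all scores lie strictly below the test score, the test score is at most
the `k`-th smallest calibration score, and the test point is covered. In every realisation at
least `k` indices have strict rank `< k`; since the scores are i.i.d., their joint law is
invariant under permutations, so every index has this property with the same probability.
Hence `(n+1) · ℙ(test rank < k) ≥ k ≥ (n+1)(1-α)`.
-/

open MeasureTheory ProbabilityTheory
open scoped Classical

/-- The `k`-th smallest value (order statistic of rank `k`, 1-indexed) of a list of reals. -/
noncomputable def kthSmallest (l : List ℝ) (k : ℕ) : ℝ :=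
  (l.mergeSort (fun a b => a ≤ b)).getD (k - 1) 0

open Finset
open scoped ENNReal

section Rank

variable {ι α : Type*} [Fintype ι] [LinearOrder α]

def strictRank (v : ι → α) (j : ι) : ℕ := #{i | v i < v j}

lemma strictRank_comp_perm (v : ι → α) (e : Equiv.Perm ι) (j : ι) :
    strictRank (v ∘ e) j = strictRank v (e j) := by
  refine Finset.card_bij (fun i _ => e i) (by simp) (fun _ _ _ _ h => e.injective h) ?_
  intro i hi
  exact ⟨e.symm i, by simpa using hi, by simp⟩

lemma le_card_filter_strictRank_lt {k : ℕ} (hk : k ≤ Fintype.card ι) (v : ι → α) :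
    k ≤ #{j | strictRank v j < k} := by
  set S : Finset ι := {j | strictRank v j < k}
  by_contra! hS
  have hne : Sᶜ.Nonempty := by
    rw [← Finset.card_pos, Finset.card_compl]
    omega
  -- a minimal value outside `S` has only elements of `S` below it, hence rank `< k`
  obtain ⟨j, hjS, hmin⟩ := Sᶜ.exists_min_image v hne
  have hrank : strictRank v j ≤ #S := by
    refine Finset.card_le_card fun i hi => ?_
    by_contra hiS
    simp only [Finset.mem_filter, Finset.mem_univ, true_and] at hi
    exact (hmin i (Finset.mem_compl.2 hiS)).not_gt hi
  simp only [S, Finset.mem_compl, Finset.mem_filter, Finset.mem_univ, true_and] at hjS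
  omega

lemma measurable_strictRank (j : ι) : Measurable fun v : ι → ℝ => strictRank v j := by
  simp_rw [strictRank, Finset.card_filter]
  refine Finset.measurable_sum _ fun i _ => Measurable.ite ?_ measurable_const measurable_const
  exact measurableSet_lt (measurable_pi_apply i) (measurable_pi_apply j)

end Rank

lemma List.countP_ofFn_eq_card_filter {α : Type*} {n : ℕ} (w : Fin n → α) (p : α → Prop)
    [DecidablePred p] : (List.ofFn w).countP (p ·) = #{i | p (w i)} := by
  rw [← Multiset.coe_countP, ← Fin.univ_val_map, Multiset.countP_map, Finset.card_def,
    Finset.filter_val]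

lemma le_kthSmallest_of_countP_lt {l : List ℝ} {t : ℝ} {k : ℕ} (hk : 1 ≤ k)
    (hkl : k ≤ l.length) (h : l.countP (· < t) < k) : t ≤ kthSmallest l k := by
  set l' := l.mergeSort (· ≤ ·)
  have hsorted : l'.SortedLE := List.sortedLE_mergeSort
  have hperm : l'.Perm l := List.mergeSort_perm l _
  have hlen : k - 1 < l'.length := by rw [hperm.length_eq]; omega
  rw [kthSmallest, List.getD_eq_getElem _ _ hlen]
  -- otherwise the first `k` sorted entries all lie below `t`
  by_contra! hlt
  have hprefix : (l'.take k).countP (· < t) = k := by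
    rw [List.countP_eq_length.2, List.length_take_of_le (by omega)]
    intro a ha
    obtain ⟨i, hi, rfl⟩ := List.getElem_of_mem ha
    rw [List.length_take_of_le (by omega)] at hi
    have : l'[i] ≤ l'[k - 1] :=
      hsorted (show (⟨i, by omega⟩ : Fin l'.length) ≤ ⟨k - 1, hlen⟩ from Fin.mk_le_mk.2 (by omega))
    simp only [List.getElem_take, decide_eq_true_eq]
    linarith
  have := (List.take_sublist k l').countP_le (p := (· < t))
  rw [hperm.countP_eq] at this
  omega

lemma le_kthSmallest_of_strictRank_last_lt {n k : ℕ} (hk : 1 ≤ k) (hkn : k ≤ n)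
    (v : Fin (n + 1) → ℝ) (h : strictRank v (Fin.last n) < k) :
    v (Fin.last n) ≤ kthSmallest (List.ofFn fun i : Fin n => v i.castSucc) k := by
  refine le_kthSmallest_of_countP_lt hk (by simpa using hkn) ?_
  rw [List.countP_ofFn_eq_card_filter]
  refine lt_of_le_of_lt (Finset.card_le_card_of_injOn Fin.castSucc (fun i hi => ?_)
    (Fin.castSucc_injective n).injOn) h
  simpa using hi

section Exchangeable

variable {ι Ω β : Type*} [Fintype ι] [MeasurableSpace Ω] [MeasurableSpace β]
  {P : Measure Ω} {X : ι → Ω → β}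

lemma ProbabilityTheory.iIndepFun.map_comp_perm_eq [IsProbabilityMeasure P]
    (hindep : iIndepFun X P) (hident : ∀ i j, IdentDistrib (X i) (X j) P P) (e : Equiv.Perm ι) :
    P.map (fun ω i => X (e i) ω) = P.map (fun ω i => X i ω) := by
  have hX : ∀ i, AEMeasurable (X i) P := fun i => (hident i i).aemeasurable_fst
  rw [(hindep.precomp e.injective).map_fun_eq_pi_map fun i => hX (e i),
    hindep.map_fun_eq_pi_map hX]
  simp only [fun i => (hident (e i) i).map_eq]

lemma le_sum_measure_of_le_card_filter_mem {A : ι → Set Ω} {k : ℕ}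
    (hA : ∀ j, NullMeasurableSet (A j) P) (h : ∀ ω, k ≤ #{j | ω ∈ A j}) :
    k * P Set.univ ≤ ∑ j, P (A j) := by
  have hcount : ∀ ω, (#{j | ω ∈ A j} : ℝ≥0∞) = ∑ j, (A j).indicator 1 ω := by
    intro ω
    simp [Set.indicator_apply]
  calc k * P Set.univ = ∫⁻ _, (k : ℝ≥0∞) ∂P := (lintegral_const _).symm
    _ ≤ ∫⁻ ω, ∑ j, (A j).indicator 1 ω ∂P :=
        lintegral_mono fun ω => by rw [← hcount]; exact Nat.cast_le.2 (h ω)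
    _ = ∑ j, P (A j) := by
        rw [lintegral_finsetSum' (f := fun j => (A j).indicator 1) _
          fun j _ => aemeasurable_one.indicator₀ (hA j)]
        simp [lintegral_indicator_one₀ (hA _)]

variable [IsProbabilityMeasure P] {X : ι → Ω → ℝ}

lemma measure_strictRank_lt_eq (hindep : iIndepFun X P)
    (hident : ∀ i j, IdentDistrib (X i) (X j) P P) (k : ℕ) (j j' : ι) :
    P {ω | strictRank (fun i => X i ω) j < k} = P {ω | strictRank (fun i => X i ω) j' < k} := by
  set e := Equiv.swap j j'
  have hX : ∀ i, AEMeasurable (X i) P := fun i => (hident i i).aemeasurable_fst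
  have hB : MeasurableSet {v : ι → ℝ | strictRank v j' < k} :=
    measurable_strictRank j' measurableSet_Iio
  have hswap : {ω | strictRank (fun i => X i ω) j < k} =
      (fun ω i => X (e i) ω) ⁻¹' {v | strictRank v j' < k} := by
    ext ω
    change _ ↔ strictRank ((fun i => X i ω) ∘ e) j' < k
    rw [strictRank_comp_perm, Equiv.swap_apply_right]
    rfl
  rw [hswap, ← Measure.map_apply_of_aemeasurable (aemeasurable_pi_lambda _ fun i => hX (e i)) hB,
    hindep.map_comp_perm_eq hident e,
    Measure.map_apply_of_aemeasurable (aemeasurable_pi_lambda _ hX) hB]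
  rfl

lemma le_card_mul_measure_strictRank_lt (hindep : iIndepFun X P)
    (hident : ∀ i j, IdentDistrib (X i) (X j) P P) {k : ℕ} (hk : k ≤ Fintype.card ι) (j : ι) :
    k ≤ Fintype.card ι * P {ω | strictRank (fun i => X i ω) j < k} := by
  have hX : AEMeasurable (fun ω i => X i ω) P :=
    aemeasurable_pi_lambda _ fun i => (hident i i).aemeasurable_fst
  have hA : ∀ j', NullMeasurableSet {ω | strictRank (fun i => X i ω) j' < k} P := fun j' =>
    hX.nullMeasurable (measurable_strictRank j' measurableSet_Iio)
  calc (k : ℝ≥0∞) = k * P Set.univ := by simp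
    _ ≤ ∑ j', P {ω | strictRank (fun i => X i ω) j' < k} :=
        le_sum_measure_of_le_card_filter_mem hA fun ω => by
          simpa using le_card_filter_strictRank_lt hk fun i => X i ω
    _ = Fintype.card ι * P {ω | strictRank (fun i => X i ω) j < k} := by
        simp [measure_strictRank_lt_eq hindep hident k _ j]

end Exchangeable

theorem conformal_locally_weighted_coverage_general
    {Ω : Type*} [MeasurableSpace Ω] (P : Measure Ω) [IsProbabilityMeasure P]
    {𝒳 : Type*} [MeasurableSpace 𝒳]
    (n : ℕ) (α : ℝ) (hα1 : α < 1)
    (hk : ⌈((n : ℝ) + 1) * (1 - α)⌉ ≤ (n : ℤ))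
    (μ σ : 𝒳 → ℝ) (hμ : Measurable μ) (hσ : Measurable σ) (hσpos : ∀ x, 0 < σ x)
    (Z : Fin (n + 1) → Ω → 𝒳 × ℝ)
    (hindep : iIndepFun Z P)
    (hident : ∀ i j, IdentDistrib (Z i) (Z j) P P)
    (qhat : Ω → ℝ)
    (hqhat : ∀ ω, qhat ω =
      kthSmallest
        (List.ofFn (fun i : Fin n =>
          |(Z i.castSucc ω).2 - μ (Z i.castSucc ω).1| / σ (Z i.castSucc ω).1))
        (⌈((n : ℝ) + 1) * (1 - α)⌉.toNat)) :
    ENNReal.ofReal (1 - α) ≤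
      P {ω | μ (Z (Fin.last n) ω).1 - qhat ω * σ (Z (Fin.last n) ω).1 ≤ (Z (Fin.last n) ω).2 ∧
             (Z (Fin.last n) ω).2 ≤ μ (Z (Fin.last n) ω).1 + qhat ω * σ (Z (Fin.last n) ω).1} := by
  set k := ⌈((n : ℝ) + 1) * (1 - α)⌉.toNat
  have hceil_pos : 0 < ⌈((n : ℝ) + 1) * (1 - α)⌉ :=
    Int.ceil_pos.2 (mul_pos (by positivity) (by linarith))
  have hk1 : 1 ≤ k := by omega
  have hkn : k ≤ n := by omega
  have hkr : ((n : ℝ) + 1) * (1 - α) ≤ k := by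
    have := Int.le_ceil (((n : ℝ) + 1) * (1 - α))
    rwa [← Int.toNat_of_nonneg hceil_pos.le, Int.cast_natCast] at this
  set score : 𝒳 × ℝ → ℝ := fun z => |z.2 - μ z.1| / σ z.1
  have hscore : Measurable score := by fun_prop
  have hrank := le_card_mul_measure_strictRank_lt (hindep.comp (fun _ => score) fun _ => hscore)
    (fun i j => (hident i j).comp hscore) (k := k) (by simp; omega) (Fin.last n)
  have hcover : ENNReal.ofReal (1 - α) ≤
      P {ω | strictRank (fun i => score (Z i ω)) (Fin.last n) < k} := by
    refine (ENNReal.mul_le_mul_iff_right (a := (n : ℝ≥0∞) + 1) (by simp) (by simp)).1 ?_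
    calc ((n : ℝ≥0∞) + 1) * ENNReal.ofReal (1 - α) = ENNReal.ofReal ((n + 1) * (1 - α)) := by
          rw [ENNReal.ofReal_mul (by positivity)]
          norm_cast
      _ ≤ k := by simpa using ENNReal.ofReal_le_ofReal hkr
      _ ≤ _ := by simpa using hrank
  refine hcover.trans (measure_mono fun ω hω => ?_)
  have hq : score (Z (Fin.last n) ω) ≤ qhat ω := by
    rw [hqhat]
    exact le_kthSmallest_of_strictRank_last_lt hk1 hkn _ hω
  rw [div_le_iff₀ (hσpos _)] at hq
  obtain ⟨hupper, hlower⟩ := abs_sub_le_iff.1 hq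
  constructor <;> linarith

/-- **Coverage guarantee for split conformal prediction with a locally weighted
(mean–standard deviation) score (Algorithm 1).**
Given i.i.d. pairs `(X₁,Y₁), …, (Xₙ,Yₙ), (X_test, Y_test)` in `𝒳 × ℝ`, measurable
`μ, σ : 𝒳 → ℝ` with `σ > 0`, calibration scores `sᵢ = |Yᵢ - μ(Xᵢ)|/σ(Xᵢ)`, and `q̂` the
`⌈(n+1)(1-α)⌉`-th smallest calibration score, we have
`ℙ(μ(X_test) - q̂·σ(X_test) ≤ Y_test ≤ μ(X_test) + q̂·σ(X_test)) ≥ 1 - α`. -/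
theorem conformal_locally_weighted_coverage
    {Ω : Type*} [MeasurableSpace Ω] (P : Measure Ω) [IsProbabilityMeasure P]
    {𝒳 : Type*} [MeasurableSpace 𝒳]
    (n : ℕ) (hn : 0 < n) (α : ℝ) (hα0 : 0 < α) (hα1 : α < 1)
    (hk : ⌈((n : ℝ) + 1) * (1 - α)⌉ ≤ (n : ℤ))
    (μ σ : 𝒳 → ℝ) (hμ : Measurable μ) (hσ : Measurable σ) (hσpos : ∀ x, 0 < σ x)
    (Z : Fin (n + 1) → Ω → 𝒳 × ℝ)
    (hZmeas : ∀ i, Measurable (Z i))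
    (hindep : iIndepFun Z P)
    (hident : ∀ i j, IdentDistrib (Z i) (Z j) P P)
    (qhat : Ω → ℝ)
    (hqhat : ∀ ω, qhat ω =
      kthSmallest
        (List.ofFn (fun i : Fin n =>
          |(Z i.castSucc ω).2 - μ (Z i.castSucc ω).1| / σ (Z i.castSucc ω).1))
        (⌈((n : ℝ) + 1) * (1 - α)⌉.toNat)) :
    ENNReal.ofReal (1 - α) ≤
      P {ω | μ (Z (Fin.last n) ω).1 - qhat ω * σ (Z (Fin.last n) ω).1 ≤ (Z (Fin.last n) ω).2 ∧
             (Z (Fin.last n) ω).2 ≤ μ (Z (Fin.last n) ω).1 + qhat ω * σ (Z (Fin.last n) ω).1} :=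
  conformal_locally_weighted_coverage_general P n α hα1 hk μ σ hμ hσ hσpos Z hindep hident qhat
    hqhat
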